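/- With notation as in the extended-domain construction (Theorem on merging evaluation with pruning): for every ADTerm t, if the second component of the extended evaluation α̂(t) equals 1 (true), then the first component of α̂(t) equals α'(t), where α' is the bottom-up evaluation with the original domain (D, ∘, •, •, ∘, •, ∘) on the pruned term obtained from t by replacing every maximal subterm whose sat_p value is 0 with the neutral element e_∘. -/
import Mathlib


/-- Attack--defense terms over a set `B` of basic-action names.  Each node
    carries a type tag `s : Bool`: `true` is the proponent's type, `false` the
    opponent's.  Unranked refinements are represented by a head term plus a
    list of further arguments (so every refinement has at least one argument). -/
inductive ADTerm (B : Type) : Type where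
  | basic (s : Bool) (b : B) : ADTerm B
  | disj (s : Bool) (t : ADTerm B) (ts : List (ADTerm B)) : ADTerm B
  | conj (s : Bool) (t : ADTerm B) (ts : List (ADTerm B)) : ADTerm B
  | cnt  (s : Bool) (t : ADTerm B) (u : ADTerm B) : ADTerm B

/-- The type (head-symbol type) of an ADTerm. -/
def ADTerm.typ {B : Type} : ADTerm B → Bool
  | .basic s _ => s | .disj s _ _ => s | .conj s _ _ => s | .cnt s _ _ => s

/-- Well-typedness: refining children have the same type as their parent, and a
    countermeasure has the opposite type. -/
inductive ADTerm.WT {B : Type} : ADTerm B → Prop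
  | basic (s : Bool) (b : B) : WT (.basic s b)
  | disj (s : Bool) (t : ADTerm B) (ts : List (ADTerm B)) :
      t.typ = s → WT t → (∀ u ∈ ts, u.typ = s) → (∀ u ∈ ts, WT u) → WT (.disj s t ts)
  | conj (s : Bool) (t : ADTerm B) (ts : List (ADTerm B)) :
      t.typ = s → WT t → (∀ u ∈ ts, u.typ = s) → (∀ u ∈ ts, WT u) → WT (.conj s t ts)
  | cnt (s : Bool) (t u : ADTerm B) :
      t.typ = s → u.typ = !s → WT t → WT u → WT (.cnt s t u)

/-- An attribute domain `(D, ∨ᵖ, ∧ᵖ, ∨ᵒ, ∧ᵒ, cᵖ, cᵒ)`; unranked operations are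
    obtained by folding the binary ones. -/
structure AttrDom (D : Type) where
  orP : D → D → D
  andP : D → D → D
  orO : D → D → D
  andO : D → D → D
  cntP : D → D → D
  cntO : D → D → D

/-- Bottom-up evaluation of an attribute on an ADTerm, given a basic assignment
    `β` (which may depend on the type of the basic action). -/
def AttrDom.eval {B D : Type} (A : AttrDom D) (β : Bool → B → D) : ADTerm B → D
  | .basic s b => β s b
  | .disj s t ts =>
      (ts.attach.map (fun u => A.eval β u.1)).foldl (if s then A.orP else A.orO) (A.eval β t)
  | .conj s t ts =>
      (ts.attach.map (fun u => A.eval β u.1)).foldl (if s then A.andP else A.andO) (A.eval β t)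
  | .cnt s t u => (if s then A.cntP else A.cntO) (A.eval β t) (A.eval β u)
  termination_by t => sizeOf t
  decreasing_by all_goals simp_wf <;> first
    | (have := List.sizeOf_lt_of_mem u.2; omega)
    | omega

/-- The satisfiability attribute domain `({0,1}, ∨, ∧, ∨, ∧, ⋆, ⋆)`,
    `⋆(x,y) = x ∧ ¬y`. -/
def satDom : AttrDom Bool :=
  ⟨(· || ·), (· && ·), (· || ·), (· && ·), fun x y => x && !y, fun x y => x && !y⟩

/-- The `sat_owner` attribute domain for owner = proponent:
    `({0,1}, ∨, ∧, ∧, ∨, ∧, ∨)`. -/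
def satPDom : AttrDom Bool :=
  ⟨(· || ·), (· && ·), (· && ·), (· || ·), (· && ·), (· || ·)⟩

/-- Basic assignment for `sat_owner` with owner = proponent: `1` on proponent
    basic actions, `0` on opponent basic actions. -/
def satPAssign {B : Type} : Bool → B → Bool := fun s _ => s

/-- `d ⊗ 1 = d`, `d ⊗ 0 = e`. -/
def otimes {D : Type} (e : D) (d : D) (f : Bool) : D := if f then d else e

/-- Extension of a binary operation to `D × Bool`, combining the Boolean flags
    with `flagOp`. -/
def extOp {D : Type} (op : D → D → D) (e : D) (flagOp : Bool → Bool → Bool) :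
    D × Bool → D × Bool → D × Bool :=
  fun x y => (op (otimes e x.1 x.2) (otimes e y.1 y.2), flagOp x.2 y.2)

/-- The extended attribute domain `(D̂, ∘̂, •̂, •̂, ∘̂, •̂, ∘̂)` built from a
    Class 1 (proponent-owned) domain `(D, ∘, •, •, ∘, •, ∘)` with `e` the
    neutral element of `∘`; the flags of `∘̂` combine by `∨` and those of `•̂`
    by `∧`. -/
def extDom {D : Type} (circ bull : D → D → D) (e : D) : AttrDom (D × Bool) where
  orP := extOp circ e (· || ·)
  andP := extOp bull e (· && ·)
  orO := extOp bull e (· && ·)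
  andO := extOp circ e (· || ·)
  cntP := extOp bull e (· && ·)
  cntO := extOp circ e (· || ·)

/-- The Class 1 attribute domain template `(D, ∘, •, •, ∘, •, ∘)` for a
    proponent-owned question. -/
def plainDom {D : Type} (circ bull : D → D → D) : AttrDom D :=
  ⟨circ, bull, bull, circ, bull, circ⟩

/-- Evaluation with the Class 1 domain on the pruned term: every maximal
    subterm whose `sat_p` value is `0` contributes the neutral element `e`. -/
def prunedEval {B D : Type} (A : AttrDom D) (β : Bool → B → D) (e : D) :
    ADTerm B → D
  | .basic s b => β s b
  | .disj s t ts =>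
      (ts.attach.map (fun u =>
          if satPDom.eval satPAssign u.1 then prunedEval A β e u.1 else e)).foldl
        (if s then A.orP else A.orO)
        (if satPDom.eval satPAssign t then prunedEval A β e t else e)
  | .conj s t ts =>
      (ts.attach.map (fun u =>
          if satPDom.eval satPAssign u.1 then prunedEval A β e u.1 else e)).foldl
        (if s then A.andP else A.andO)
        (if satPDom.eval satPAssign t then prunedEval A β e t else e)
  | .cnt s t u =>
      (if s then A.cntP else A.cntO)
        (if satPDom.eval satPAssign t then prunedEval A β e t else e)
        (if satPDom.eval satPAssign u then prunedEval A β e u else e)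
  termination_by t => sizeOf t
  decreasing_by all_goals simp_wf <;> first
    | (have := List.sizeOf_lt_of_mem u.2; omega)
    | omega

section Aux

variable {B D : Type}

lemma foldl_extOp_snd (op : D → D → D) (e : D) (f : Bool → Bool → Bool)
    (L : List (D × Bool)) (x : D × Bool) :
    (L.foldl (extOp op e f) x).2 = (L.map Prod.snd).foldl f x.2 := by
  induction L generalizing x with
  | nil => rfl
  | cons y L ih => simp [List.foldl_cons, ih, extOp]

lemma foldl_and_true {L : List Bool} {b : Bool}
    (h : L.foldl (· && ·) b = true) : b = true := by
  induction L generalizing b with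
  | nil => exact h
  | cons a L ih =>
      have := ih h
      simp only [Bool.and_eq_true] at this
      exact this.1

lemma foldl_extOp_or (circ : D → D → D) (e : D)
    (he : ∀ d : D, circ e d = d ∧ circ d e = d)
    (L : List (D × Bool)) (x : D × Bool) :
    otimes e (L.foldl (extOp circ e (· || ·)) x).1
             (L.foldl (extOp circ e (· || ·)) x).2 =
      (L.map (fun p => otimes e p.1 p.2)).foldl circ (otimes e x.1 x.2) := by
  induction L generalizing x with
  | nil => rfl
  | cons y L ih =>
      rw [List.foldl_cons, ih, List.map_cons, List.foldl_cons]
      congr 1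
      cases hx : x.2 <;> cases hy : y.2 <;>
        simp [extOp, otimes, hx, hy, (he e).1]

lemma foldl_extOp_and (bull : D → D → D) (e : D)
    (L : List (D × Bool)) (x : D × Bool)
    (h : (L.foldl (extOp bull e (· && ·)) x).2 = true) :
    (L.foldl (extOp bull e (· && ·)) x).1 =
      (L.map (fun p => otimes e p.1 p.2)).foldl bull (otimes e x.1 x.2) := by
  induction L generalizing x with
  | nil => simp only [List.foldl_nil] at h ⊢; simp [otimes, h]
  | cons y L ih =>
      rw [List.foldl_cons] at h ⊢
      have hsnd := foldl_extOp_snd bull e (· && ·) L (extOp bull e (· && ·) x y)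
      rw [h] at hsnd
      have h2 := foldl_and_true hsnd.symm
      simp only [extOp, Bool.and_eq_true] at h2
      rw [ih _ h, List.map_cons, List.foldl_cons]
      congr 1
      simp [extOp, otimes, h2.1, h2.2]

end Aux
section Fields
variable {B D : Type} (circ bull : D → D → D) (e : D)

lemma extDom_orP : (extDom circ bull e).orP = extOp circ e (· || ·) := rfl
lemma extDom_andP : (extDom circ bull e).andP = extOp bull e (· && ·) := rfl
lemma extDom_orO : (extDom circ bull e).orO = extOp bull e (· && ·) := rfl
lemma extDom_andO : (extDom circ bull e).andO = extOp circ e (· || ·) := rfl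
lemma extDom_cntP : (extDom circ bull e).cntP = extOp bull e (· && ·) := rfl
lemma extDom_cntO : (extDom circ bull e).cntO = extOp circ e (· || ·) := rfl

lemma satPDom_orP : satPDom.orP = (· || ·) := rfl
lemma satPDom_andP : satPDom.andP = (· && ·) := rfl
lemma satPDom_orO : satPDom.orO = (· && ·) := rfl
lemma satPDom_andO : satPDom.andO = (· || ·) := rfl
lemma satPDom_cntP : satPDom.cntP = (· && ·) := rfl
lemma satPDom_cntO : satPDom.cntO = (· || ·) := rfl

lemma plainDom_orP : (plainDom circ bull).orP = circ := rfl
lemma plainDom_andP : (plainDom circ bull).andP = bull := rfl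
lemma plainDom_orO : (plainDom circ bull).orO = bull := rfl
lemma plainDom_andO : (plainDom circ bull).andO = circ := rfl
lemma plainDom_cntP : (plainDom circ bull).cntP = bull := rfl
lemma plainDom_cntO : (plainDom circ bull).cntO = circ := rfl

end Fields

lemma ext_flag {B D : Type} (circ bull : D → D → D) (e : D) (β : Bool → B → D) :
    ∀ t : ADTerm B,
      ((extDom circ bull e).eval (fun s b => (β s b, s)) t).2 =
        satPDom.eval satPAssign t
  | .basic s b => by simp [AttrDom.eval, satPAssign]
  | .disj s t ts => by
      rw [AttrDom.eval, AttrDom.eval]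
      cases s <;>
      · simp only [if_true, if_false, Bool.false_eq_true, extDom_orP, extDom_orO,
          satPDom_orP, satPDom_orO]
        rw [foldl_extOp_snd, List.map_map, ext_flag circ bull e β t]
        congr 1
        exact List.map_congr_left fun u hu => ext_flag circ bull e β u.1
  | .conj s t ts => by
      rw [AttrDom.eval, AttrDom.eval]
      cases s <;>
      · simp only [if_true, if_false, Bool.false_eq_true, extDom_andP, extDom_andO,
          satPDom_andP, satPDom_andO]
        rw [foldl_extOp_snd, List.map_map, ext_flag circ bull e β t]
        congr 1
        exact List.map_congr_left fun u hu => ext_flag circ bull e β u.1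
  | .cnt s t u => by
      rw [AttrDom.eval, AttrDom.eval]
      cases s <;>
      · simp only [if_true, if_false, Bool.false_eq_true, extDom_cntP, extDom_cntO,
          satPDom_cntP, satPDom_cntO, extOp]
        rw [ext_flag circ bull e β t, ext_flag circ bull e β u]
  termination_by t => sizeOf t
  decreasing_by all_goals simp_wf <;> first
    | (have := List.sizeOf_lt_of_mem u.2; omega)
    | omega
lemma ext_key {B D : Type} (circ bull : D → D → D) (e : D)
    (he : ∀ d : D, circ e d = d ∧ circ d e = d) (β : Bool → B → D) :
    ∀ t : ADTerm B,
      otimes e ((extDom circ bull e).eval (fun s b => (β s b, s)) t).1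
               ((extDom circ bull e).eval (fun s b => (β s b, s)) t).2 =
        (if satPDom.eval satPAssign t then prunedEval (plainDom circ bull) β e t
         else e)
  | .basic s b => by
      cases s <;> simp [AttrDom.eval, prunedEval, satPAssign, otimes]
  | .disj s t ts => by
      by_cases hs : satPDom.eval satPAssign (ADTerm.disj s t ts) = true
      · rw [if_pos hs]
        have hflag := ext_flag circ bull e β (.disj s t ts)
        cases s
        · -- opponent disjunction: bull, flags combined with &&
          have heq : (extDom circ bull e).eval (fun s b => (β s b, s)) (.disj false t ts) =
              (ts.attach.map (fun u => (extDom circ bull e).eval (fun s b => (β s b, s)) u.1)).foldl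
                (extOp bull e (· && ·))
                ((extDom circ bull e).eval (fun s b => (β s b, s)) t) := by
            rw [AttrDom.eval]; simp only [Bool.false_eq_true, if_false, extDom_orO]
          have hf2 : ((ts.attach.map (fun u => (extDom circ bull e).eval (fun s b => (β s b, s)) u.1)).foldl
                (extOp bull e (· && ·))
                ((extDom circ bull e).eval (fun s b => (β s b, s)) t)).2 = true := by
            rw [← heq, hflag, hs]
          rw [heq, hf2]
          simp only [otimes, if_true]
          rw [foldl_extOp_and bull e _ _ hf2, prunedEval]
          simp only [Bool.false_eq_true, if_false, plainDom_orO, List.map_map]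
          rw [ext_key circ bull e he β t]
          congr 1
          exact List.map_congr_left fun u hu => ext_key circ bull e he β u.1
        · -- proponent disjunction: circ, flags combined with ||
          have heq : (extDom circ bull e).eval (fun s b => (β s b, s)) (.disj true t ts) =
              (ts.attach.map (fun u => (extDom circ bull e).eval (fun s b => (β s b, s)) u.1)).foldl
                (extOp circ e (· || ·))
                ((extDom circ bull e).eval (fun s b => (β s b, s)) t) := by
            rw [AttrDom.eval]; simp only [if_true, extDom_orP]
          rw [heq, foldl_extOp_or circ e he, prunedEval]
          simp only [if_true, plainDom_orP, List.map_map]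
          rw [ext_key circ bull e he β t]
          congr 1
          exact List.map_congr_left fun u hu => ext_key circ bull e he β u.1
      · rw [if_neg hs]
        rw [ext_flag circ bull e β (.disj s t ts)]
        simp only [Bool.not_eq_true] at hs
        rw [hs]
        rfl
  | .conj s t ts => by
      by_cases hs : satPDom.eval satPAssign (ADTerm.conj s t ts) = true
      · rw [if_pos hs]
        have hflag := ext_flag circ bull e β (.conj s t ts)
        cases s
        · -- opponent conjunction: circ, flags combined with ||
          have heq : (extDom circ bull e).eval (fun s b => (β s b, s)) (.conj false t ts) =
              (ts.attach.map (fun u => (extDom circ bull e).eval (fun s b => (β s b, s)) u.1)).foldl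
                (extOp circ e (· || ·))
                ((extDom circ bull e).eval (fun s b => (β s b, s)) t) := by
            rw [AttrDom.eval]; simp only [Bool.false_eq_true, if_false, extDom_andO]
          rw [heq, foldl_extOp_or circ e he, prunedEval]
          simp only [Bool.false_eq_true, if_false, plainDom_andO, List.map_map]
          rw [ext_key circ bull e he β t]
          congr 1
          exact List.map_congr_left fun u hu => ext_key circ bull e he β u.1
        · -- proponent conjunction: bull, flags combined with &&
          have heq : (extDom circ bull e).eval (fun s b => (β s b, s)) (.conj true t ts) =
              (ts.attach.map (fun u => (extDom circ bull e).eval (fun s b => (β s b, s)) u.1)).foldl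
                (extOp bull e (· && ·))
                ((extDom circ bull e).eval (fun s b => (β s b, s)) t) := by
            rw [AttrDom.eval]; simp only [if_true, extDom_andP]
          have hf2 : ((ts.attach.map (fun u => (extDom circ bull e).eval (fun s b => (β s b, s)) u.1)).foldl
                (extOp bull e (· && ·))
                ((extDom circ bull e).eval (fun s b => (β s b, s)) t)).2 = true := by
            rw [← heq, hflag, hs]
          rw [heq, hf2]
          simp only [otimes, if_true]
          rw [foldl_extOp_and bull e _ _ hf2, prunedEval]
          simp only [if_true, plainDom_andP, List.map_map]
          rw [ext_key circ bull e he β t]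
          congr 1
          exact List.map_congr_left fun u hu => ext_key circ bull e he β u.1
      · rw [if_neg hs]
        rw [ext_flag circ bull e β (.conj s t ts)]
        simp only [Bool.not_eq_true] at hs
        rw [hs]
        rfl
  | .cnt s t u => by
      by_cases hs : satPDom.eval satPAssign (ADTerm.cnt s t u) = true
      · rw [if_pos hs]
        rw [AttrDom.eval] at hs ⊢
        rw [prunedEval]
        cases s
        · -- opponent countermeasure: circ, ||
          simp only [Bool.false_eq_true, if_false, extDom_cntO, plainDom_cntO,
            satPDom_cntO, extOp] at hs ⊢
          rw [ext_key circ bull e he β t, ext_key circ bull e he β u,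
            ext_flag circ bull e β t, ext_flag circ bull e β u, hs]
          simp [otimes]
        · -- proponent countermeasure: bull, &&
          simp only [if_true, extDom_cntP, plainDom_cntP, satPDom_cntP, extOp] at hs ⊢
          rw [ext_key circ bull e he β t, ext_key circ bull e he β u,
            ext_flag circ bull e β t, ext_flag circ bull e β u, hs]
          simp [otimes]
      · rw [if_neg hs]
        rw [ext_flag circ bull e β (.cnt s t u)]
        simp only [Bool.not_eq_true] at hs
        rw [hs]
        rfl
  termination_by t => sizeOf t
  decreasing_by all_goals simp_wf <;> first
    | (have := List.sizeOf_lt_of_mem u.2; omega)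
    | omega
/-- If the flag of the extended evaluation of `t` is `1`, then its first
    component equals the evaluation with the original Class 1 domain on the
    term pruned with respect to `sat_p`. -/
theorem stmt6 {B D : Type} (circ bull : D → D → D) (e : D)
    (he : ∀ d : D, circ e d = d ∧ circ d e = d)
    (β : Bool → B → D) (t : ADTerm B) (hWT : t.WT)
    (h2 : ((extDom circ bull e).eval (fun s b => (β s b, s)) t).2 = true) :
    ((extDom circ bull e).eval (fun s b => (β s b, s)) t).1 =
      prunedEval (plainDom circ bull) β e t := by
  have hf := ext_flag circ bull e β t
  rw [h2] at hf
  have hk := ext_key circ bull e he β t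
  rw [h2, ← hf] at hk
  simpa [otimes] using hk
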